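/- Under the standing assumptions (T spherical, a ∈ T*, the solution to Eq(T,a) separated, Γ̂ ≠ ∅, and P the minimal point of the closure of Γ̂), the point P is not a lateral point of Σ, i.e., P does not lie on the boundary of Σ away from the three vertices of Σ. -/
import Mathlib


open Function Set

variable {R C S : Type*} [DecidableEq R] [DecidableEq C] [DecidableEq S]

/-- Conditions (R1)-(R3) of a latin bitrade: `star` and `tri` are disjoint, and for every
triple in one set and every pair of coordinates there is exactly one triple of the other
set agreeing in those two coordinates. -/
structure IsLatinBitrade (star tri : Finset (R × C × S)) : Prop where
  disj : Disjoint star tri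
  r2a : ∀ p ∈ star, ∃! q, q ∈ tri ∧ q.1 = p.1 ∧ q.2.1 = p.2.1
  r2b : ∀ p ∈ star, ∃! q, q ∈ tri ∧ q.1 = p.1 ∧ q.2.2 = p.2.2
  r2c : ∀ p ∈ star, ∃! q, q ∈ tri ∧ q.2.1 = p.2.1 ∧ q.2.2 = p.2.2
  r3a : ∀ q ∈ tri, ∃! p, p ∈ star ∧ p.1 = q.1 ∧ p.2.1 = q.2.1
  r3b : ∀ q ∈ tri, ∃! p, p ∈ star ∧ p.1 = q.1 ∧ p.2.2 = q.2.2
  r3c : ∀ q ∈ tri, ∃! p, p ∈ star ∧ p.2.1 = q.2.1 ∧ p.2.2 = q.2.2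

/-- A latin bitrade is indecomposable if it is not the disjoint union of two
nonempty latin bitrades. -/
def BitradeIndecomposable (star tri : Finset (R × C × S)) : Prop :=
  ¬ ∃ s₁ t₁ s₂ t₂ : Finset (R × C × S),
      s₁.Nonempty ∧ s₂.Nonempty ∧ Disjoint s₁ s₂ ∧ Disjoint t₁ t₂ ∧
      s₁ ∪ s₂ = star ∧ t₁ ∪ t₂ = tri ∧
      IsLatinBitrade s₁ t₁ ∧ IsLatinBitrade s₂ t₂

/-- An indecomposable latin bitrade is spherical if `m = s + 2`, where `m` is the total
number of occurring rows, columns and symbols and `s` is the size. -/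
def IsSphericalBitrade (star tri : Finset (R × C × S)) : Prop :=
  IsLatinBitrade star tri ∧ BitradeIndecomposable star tri ∧
    (star.image Prod.fst).card + (star.image fun p => p.2.1).card +
      (star.image fun p => p.2.2).card = star.card + 2

/-- `(f1, f2, f3)` is a (rational) solution of the linear system `Eq(T,a)`:
`a₁ = 0`, `a₂ = 0`, `a₃ = 1`, and `b₁ + b₂ = b₃` for every `b ∈ T* \ {a}`. -/
def IsEqSolution (star : Finset (R × C × S)) (a : R × C × S)
    (f1 : R → ℚ) (f2 : C → ℚ) (f3 : S → ℚ) : Prop :=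
  f1 a.1 = 0 ∧ f2 a.2.1 = 0 ∧ f3 a.2.2 = 1 ∧
    ∀ b ∈ star, b ≠ a → f1 b.1 + f2 b.2.1 = f3 b.2.2

/-- The solution is separated: two rows (columns, symbols) receiving the same value coincide. -/
def SeparatedSolution (star : Finset (R × C × S))
    (f1 : R → ℚ) (f2 : C → ℚ) (f3 : S → ℚ) : Prop :=
  ∀ b ∈ star, ∀ d ∈ star,
    (f1 b.1 = f1 d.1 → b.1 = d.1) ∧ (f2 b.2.1 = f2 d.2.1 → b.2.1 = d.2.1) ∧
      (f3 b.2.2 = f3 d.2.2 → b.2.2 = d.2.2)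

/-- The triangle `Σ = {(x,y) : 0 ≤ x, 0 ≤ y, x + y ≤ 1}`. -/
def SigmaT : Set (ℝ × ℝ) := {p | 0 ≤ p.1 ∧ 0 ≤ p.2 ∧ p.1 + p.2 ≤ 1}

/-- The (closed) triangle bounded by the lines `y = r1`, `x = r2` and `x + y = r3`.
If `r1 + r2 = r3` this set degenerates to the single point `(r2, r1)`. -/
def DeltaT (r1 r2 r3 : ℚ) : Set (ℝ × ℝ) :=
  {p | ((r1 : ℝ) ≤ p.2 ∧ (r2 : ℝ) ≤ p.1 ∧ p.1 + p.2 ≤ (r3 : ℝ)) ∨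
       (p.2 ≤ (r1 : ℝ) ∧ p.1 ≤ (r2 : ℝ) ∧ (r3 : ℝ) ≤ p.1 + p.2)}

/-- The triangle bounded by `y = r1`, `x = r2`, `x + y = r3` degenerates:
the three lines meet in a single point. -/
def DeltaDegenerate (r1 r2 r3 : ℚ) : Prop := r1 + r2 = r3

/-- The three pairwise intersection points of the lines `y = r1`, `x = r2`, `x + y = r3`,
i.e. the vertices of the triangle they bound. -/
def DeltaVerts (r1 r2 r3 : ℚ) : Set (ℝ × ℝ) :=
  {((r2 : ℝ), (r1 : ℝ)), ((r3 : ℝ) - (r1 : ℝ), (r1 : ℝ)), ((r2 : ℝ), (r3 : ℝ) - (r2 : ℝ))}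

/-- The horizontal side (upon the line `y = r1`) of the triangle bounded by
`y = r1`, `x = r2`, `x + y = r3`. -/
def sideH (r1 r2 r3 : ℚ) : Set (ℝ × ℝ) :=
  segment ℝ ((r2 : ℝ), (r1 : ℝ)) ((r3 : ℝ) - (r1 : ℝ), (r1 : ℝ))

/-- The vertical side (upon the line `x = r2`). -/
def sideV (r1 r2 r3 : ℚ) : Set (ℝ × ℝ) :=
  segment ℝ ((r2 : ℝ), (r1 : ℝ)) ((r2 : ℝ), (r3 : ℝ) - (r2 : ℝ))

/-- The diagonal side (upon the line `x + y = r3`). -/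
def sideD (r1 r2 r3 : ℚ) : Set (ℝ × ℝ) :=
  segment ℝ ((r3 : ℝ) - (r1 : ℝ), (r1 : ℝ)) ((r2 : ℝ), (r3 : ℝ) - (r2 : ℝ))

/-- The triangle `Δ(c,a)` associated with a triple `c` and the solution `(f1,f2,f3)`. -/
def DeltaOf (f1 : R → ℚ) (f2 : C → ℚ) (f3 : S → ℚ) (c : R × C × S) : Set (ℝ × ℝ) :=
  DeltaT (f1 c.1) (f2 c.2.1) (f3 c.2.2)

/-- `Π`: the union of all sides of the triangles `Δ(c,a)`, `c ∈ T△`. -/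
def PiSet (tri : Finset (R × C × S)) (f1 : R → ℚ) (f2 : C → ℚ) (f3 : S → ℚ) :
    Set (ℝ × ℝ) :=
  ⋃ c ∈ tri, (sideH (f1 c.1) (f2 c.2.1) (f3 c.2.2) ∪
    sideV (f1 c.1) (f2 c.2.1) (f3 c.2.2) ∪ sideD (f1 c.1) (f2 c.2.1) (f3 c.2.2))

/-- `Γ = Int(Σ) \ Π`. -/
def GammaSet (tri : Finset (R × C × S)) (f1 : R → ℚ) (f2 : C → ℚ) (f3 : S → ℚ) :
    Set (ℝ × ℝ) :=
  interior SigmaT \ PiSet tri f1 f2 f3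

/-- `π(X)`: the number of triples `c ∈ T△` such that `X` lies in the interior of `Δ(c,a)`. -/
noncomputable def piCount (tri : Finset (R × C × S))
    (f1 : R → ℚ) (f2 : C → ℚ) (f3 : S → ℚ) (X : ℝ × ℝ) : ℕ :=
  {c : R × C × S | c ∈ tri ∧ X ∈ interior (DeltaOf f1 f2 f3 c)}.ncard

/-- `Γ̂ = {X ∈ Γ : π(X) ≠ 1}`. -/
def GammaHat (tri : Finset (R × C × S)) (f1 : R → ℚ) (f2 : C → ℚ) (f3 : S → ℚ) :
    Set (ℝ × ℝ) :=
  {X ∈ GammaSet tri f1 f2 f3 | piCount tri f1 f2 f3 X ≠ 1}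

/-- The order used to choose the minimal point `P`: `(α,β)` precedes `(α',β')` iff
`α+β < α'+β'`, or `α+β = α'+β'` and `β < β'`. -/
def ptOrder (p q : ℝ × ℝ) : Prop :=
  p.1 + p.2 < q.1 + q.2 ∨ (p.1 + p.2 = q.1 + q.2 ∧ p.2 < q.2)

section Aux

open scoped Classical

lemma ballAux {p q : ℝ × ℝ} {ε : ℝ} (h1 : |q.1 - p.1| < ε) (h2 : |q.2 - p.2| < ε) :
    q ∈ Metric.ball p ε := by
  rw [Metric.mem_ball, Prod.dist_eq]
  exact max_lt (by rwa [Real.dist_eq]) (by rwa [Real.dist_eq])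

lemma isClosed_SigmaT : IsClosed SigmaT := by
  have : SigmaT = {p : ℝ × ℝ | 0 ≤ p.1} ∩ ({p | 0 ≤ p.2} ∩ {p | p.1 + p.2 ≤ 1}) := by
    ext p; exact Iff.rfl
  rw [this]
  exact (isClosed_le continuous_const continuous_fst).inter
    ((isClosed_le continuous_const continuous_snd).inter
      (isClosed_le (continuous_fst.add continuous_snd) continuous_const))

lemma interior_SigmaT_eq :
    interior SigmaT = {p : ℝ × ℝ | 0 < p.1 ∧ 0 < p.2 ∧ p.1 + p.2 < 1} := by
  apply le_antisymm
  · intro p hp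
    rw [mem_interior_iff_mem_nhds, Metric.mem_nhds_iff] at hp
    obtain ⟨ε, hε, hball⟩ := hp
    have e0 : |(0:ℝ)| < ε := by rw [abs_of_nonneg le_rfl]; linarith
    have em : |(-(ε/2):ℝ)| < ε := by rw [abs_neg, abs_of_nonneg (by linarith)]; linarith
    have ep : |(ε/4:ℝ)| < ε := by rw [abs_of_nonneg (by linarith)]; linarith
    have h1 := hball (ballAux (p := p) (q := (p.1 - ε/2, p.2))
      (by simpa using em) (by simpa using e0))
    have h2 := hball (ballAux (p := p) (q := (p.1, p.2 - ε/2))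
      (by simpa using e0) (by simpa using em))
    have h3 := hball (ballAux (p := p) (q := (p.1 + ε/4, p.2))
      (by simpa using ep) (by simpa using e0))
    obtain ⟨a1, -, -⟩ := h1
    obtain ⟨-, b2, -⟩ := h2
    obtain ⟨-, -, c3⟩ := h3
    simp only [Set.mem_setOf_eq] at *
    exact ⟨by linarith, by linarith, by linarith⟩
  · refine interior_maximal ?_ ?_
    · intro p hp
      exact ⟨le_of_lt hp.1, le_of_lt hp.2.1, le_of_lt hp.2.2⟩
    have : {p : ℝ × ℝ | 0 < p.1 ∧ 0 < p.2 ∧ p.1 + p.2 < 1} =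
        {p : ℝ × ℝ | 0 < p.1} ∩ ({p | 0 < p.2} ∩ {p | p.1 + p.2 < 1}) := by
      ext p; exact Iff.rfl
    rw [this]
    exact (isOpen_lt continuous_const continuous_fst).inter
      ((isOpen_lt continuous_const continuous_snd).inter
        (isOpen_lt (continuous_fst.add continuous_snd) continuous_const))

lemma interior_DeltaT_eq (r1 r2 r3 : ℚ) :
    interior (DeltaT r1 r2 r3) =
      {p : ℝ × ℝ | ((r1 : ℝ) + r2 < r3 ∧ (r1 : ℝ) < p.2 ∧ (r2 : ℝ) < p.1 ∧ p.1 + p.2 < r3) ∨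
        ((r3 : ℝ) < (r1 : ℝ) + r2 ∧ p.2 < r1 ∧ p.1 < r2 ∧ (r3 : ℝ) < p.1 + p.2)} := by
  apply le_antisymm
  · intro p hp
    rw [mem_interior_iff_mem_nhds, Metric.mem_nhds_iff] at hp
    obtain ⟨ε, hε, hball⟩ := hp
    have e0 : |(0:ℝ)| < ε := by rw [abs_of_nonneg le_rfl]; linarith
    have em : |(-(ε/2):ℝ)| < ε := by rw [abs_neg, abs_of_nonneg (by linarith)]; linarith
    have ep : |(ε/4:ℝ)| < ε := by rw [abs_of_nonneg (by linarith)]; linarith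
    have hp0 : p ∈ DeltaT r1 r2 r3 := hball (Metric.mem_ball_self hε)
    rcases lt_trichotomy ((r1:ℝ) + r2) (r3:ℝ) with hud | hud | hud
    · -- up triangle
      have memup : ∀ q ∈ Metric.ball p ε,
          (r1 : ℝ) ≤ q.2 ∧ (r2 : ℝ) ≤ q.1 ∧ q.1 + q.2 ≤ (r3 : ℝ) := by
        intro q hq
        rcases hball hq with h | h
        · exact h
        · exfalso; obtain ⟨hA, hB, hC⟩ := h; linarith
      obtain ⟨u1, u2, u3⟩ := memup p (Metric.mem_ball_self hε)
      refine Or.inl ⟨hud, ?_, ?_, ?_⟩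
      · rcases lt_or_eq_of_le u1 with h | h
        · exact h
        · exfalso
          obtain ⟨w, -, -⟩ := memup (p.1, p.2 - ε/2)
            (ballAux (by simpa using e0) (by simpa using em))
          simp at w; linarith
      · rcases lt_or_eq_of_le u2 with h | h
        · exact h
        · exfalso
          obtain ⟨-, w, -⟩ := memup (p.1 - ε/2, p.2)
            (ballAux (by simpa using em) (by simpa using e0))
          simp at w; linarith
      · rcases lt_or_eq_of_le u3 with h | h
        · exact h
        · exfalso
          obtain ⟨-, -, w⟩ := memup (p.1 + ε/4, p.2 + ε/4)
            (ballAux (by simpa using ep) (by simpa using ep))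
          simp at w; linarith
    · -- degenerate
      exfalso
      have hxeq : ∀ q ∈ Metric.ball p ε, q.1 = (r2 : ℝ) := by
        intro q hq
        rcases hball hq with ⟨hA, hB, hC⟩ | ⟨hA, hB, hC⟩
        · linarith
        · linarith
      have w1 := hxeq p (Metric.mem_ball_self hε)
      have w2 := hxeq (p.1 + ε/4, p.2) (ballAux (by simpa using ep) (by simpa using e0))
      simp at w2; linarith
    · -- down triangle
      have memdn : ∀ q ∈ Metric.ball p ε,
          q.2 ≤ (r1 : ℝ) ∧ q.1 ≤ (r2 : ℝ) ∧ (r3 : ℝ) ≤ q.1 + q.2 := by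
        intro q hq
        rcases hball hq with h | h
        · exfalso; obtain ⟨hA, hB, hC⟩ := h; linarith
        · exact h
      obtain ⟨u1, u2, u3⟩ := memdn p (Metric.mem_ball_self hε)
      refine Or.inr ⟨hud, ?_, ?_, ?_⟩
      · rcases lt_or_eq_of_le u1 with h | h
        · exact h
        · exfalso
          obtain ⟨w, -, -⟩ := memdn (p.1, p.2 + ε/4)
            (ballAux (by simpa using e0) (by simpa using ep))
          simp at w; linarith
      · rcases lt_or_eq_of_le u2 with h | h
        · exact h
        · exfalso
          obtain ⟨-, w, -⟩ := memdn (p.1 + ε/4, p.2)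
            (ballAux (by simpa using ep) (by simpa using e0))
          simp at w; linarith
      · rcases lt_or_eq_of_le u3 with h | h
        · exact h
        · exfalso
          obtain ⟨-, -, w⟩ := memdn (p.1 - ε/2, p.2 - ε/2)
            (ballAux (by simpa using em) (by simpa using em))
          simp at w; linarith
  · intro p hp
    rcases hp with ⟨h, h1, h2, h3⟩ | ⟨h, h1, h2, h3⟩
    · refine mem_interior.2 ⟨{q : ℝ × ℝ | (r1:ℝ) < q.2} ∩ ({q | (r2:ℝ) < q.1} ∩
        {q | q.1 + q.2 < (r3:ℝ)}), ?_, ?_, ⟨h1, h2, h3⟩⟩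
      · intro q hq; exact Or.inl ⟨le_of_lt hq.1, le_of_lt hq.2.1, le_of_lt hq.2.2⟩
      · exact (isOpen_lt continuous_const continuous_snd).inter
          ((isOpen_lt continuous_const continuous_fst).inter
            (isOpen_lt (continuous_fst.add continuous_snd) continuous_const))
    · refine mem_interior.2 ⟨{q : ℝ × ℝ | q.2 < (r1:ℝ)} ∩ ({q | q.1 < (r2:ℝ)} ∩
        {q | (r3:ℝ) < q.1 + q.2}), ?_, ?_, ⟨h1, h2, h3⟩⟩
      · intro q hq; exact Or.inr ⟨le_of_lt hq.1, le_of_lt hq.2.1, le_of_lt hq.2.2⟩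
      · exact (isOpen_lt continuous_snd continuous_const).inter
          ((isOpen_lt continuous_fst continuous_const).inter
            (isOpen_lt continuous_const (continuous_fst.add continuous_snd)))

end Aux
section Aux2

variable {R C S : Type*} [DecidableEq R] [DecidableEq C] [DecidableEq S]

lemma snd_of_horiz {u v z : ℝ} {q : ℝ × ℝ} (hq : q ∈ segment ℝ (u, z) (v, z)) :
    q.2 = z := by
  obtain ⟨s, t, hs, ht, hst, rfl⟩ := hq
  show s * z + t * z = z
  linear_combination z * hst

lemma fst_of_vert {u z w : ℝ} {q : ℝ × ℝ} (hq : q ∈ segment ℝ (u, z) (u, w)) :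
    q.1 = u := by
  obtain ⟨s, t, hs, ht, hst, rfl⟩ := hq
  show s * u + t * u = u
  linear_combination u * hst

lemma sum_of_diag {u1 u2 v1 v2 w : ℝ} {q : ℝ × ℝ} (hq : q ∈ segment ℝ (u1, u2) (v1, v2))
    (hu : u1 + u2 = w) (hv : v1 + v2 = w) : q.1 + q.2 = w := by
  obtain ⟨s, t, hs, ht, hst, rfl⟩ := hq
  show (s * u1 + t * v1) + (s * u2 + t * v2) = w
  linear_combination s * hu + t * hv + w * hst

lemma vert_mem_segment {a b c z : ℝ} (h1 : c ≤ z) (h2 : z ≤ b) :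
    ((a, z) : ℝ × ℝ) ∈ segment ℝ (a, b) (a, c) := by
  have hz : z ∈ segment ℝ b c := by
    rw [segment_symm, segment_eq_Icc (le_trans h1 h2)]
    exact ⟨h1, h2⟩
  obtain ⟨s, t, hs, ht, hst, h⟩ := hz
  refine ⟨s, t, hs, ht, hst, ?_⟩
  have : s • ((a, b) : ℝ × ℝ) + t • ((a, c) : ℝ × ℝ) = (s * a + t * a, s * b + t * c) := rfl
  rw [this, Prod.ext_iff]
  constructor
  · show s * a + t * a = a; linear_combination a * hst
  · exact h

lemma diag_mem_segment {r1 r2 r3 z : ℝ} (h1 : r1 ≤ z) (h2 : z ≤ r3 - r2) :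
    ((r3 - z, z) : ℝ × ℝ) ∈ segment ℝ (r3 - r1, r1) (r2, r3 - r2) := by
  have hz : z ∈ segment ℝ r1 (r3 - r2) := by
    rw [segment_eq_Icc (le_trans h1 h2)]
    exact ⟨h1, h2⟩
  obtain ⟨s, t, hs, ht, hst, h⟩ := hz
  refine ⟨s, t, hs, ht, hst, ?_⟩
  have : s • ((r3 - r1, r1) : ℝ × ℝ) + t • ((r2, r3 - r2) : ℝ × ℝ)
      = (s * (r3 - r1) + t * r2, s * r1 + t * (r3 - r2)) := rfl
  rw [this, Prod.ext_iff]
  constructor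
  · show s * (r3 - r1) + t * r2 = r3 - z
    have hz2 : s * r1 + t * (r3 - r2) = z := h
    linear_combination r3 * hst - hz2
  · exact h

lemma mem_PiSet_of_side {tri : Finset (R × C × S)} {f1 : R → ℚ} {f2 : C → ℚ} {f3 : S → ℚ}
    {c : R × C × S} (hc : c ∈ tri) {X : ℝ × ℝ}
    (h : X ∈ sideH (f1 c.1) (f2 c.2.1) (f3 c.2.2) ∨ X ∈ sideV (f1 c.1) (f2 c.2.1) (f3 c.2.2)
      ∨ X ∈ sideD (f1 c.1) (f2 c.2.1) (f3 c.2.2)) :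
    X ∈ PiSet tri f1 f2 f3 := by
  rw [PiSet, Set.mem_iUnion]
  refine ⟨c, Set.mem_iUnion.2 ⟨hc, ?_⟩⟩
  rcases h with h | h | h
  · exact Or.inl (Or.inl h)
  · exact Or.inl (Or.inr h)
  · exact Or.inr h

lemma closure_GammaHat_subset_SigmaT {tri : Finset (R × C × S)}
    {f1 : R → ℚ} {f2 : C → ℚ} {f3 : S → ℚ} :
    closure (GammaHat tri f1 f2 f3) ⊆ SigmaT := by
  apply closure_minimal _ isClosed_SigmaT
  intro x hx
  exact interior_subset hx.1.1

open scoped Classical in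
lemma piCount_eq_card {tri : Finset (R × C × S)} {f1 : R → ℚ} {f2 : C → ℚ} {f3 : S → ℚ}
    (X : ℝ × ℝ) :
    piCount tri f1 f2 f3 X
      = (tri.filter fun c => X ∈ interior (DeltaOf f1 f2 f3 c)).card := by
  rw [piCount]
  rw [show {c : R × C × S | c ∈ tri ∧ X ∈ interior (DeltaOf f1 f2 f3 c)}
      = ↑(tri.filter fun c => X ∈ interior (DeltaOf f1 f2 f3 c)) by
    ext c; simp [Finset.mem_filter]]
  rw [Set.ncard_coe_finset]

end Aux2
section Aux3
set_option linter.unusedSectionVars false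
open scoped Classical

variable {R C S : Type*} [DecidableEq R] [DecidableEq C] [DecidableEq S]
variable {star tri : Finset (R × C × S)}

/-- Generic bijection-sum lemma along a two-coordinate-sharing relation of a bitrade. -/
lemma sum_bij_rel {β : Type*} [AddCommMonoid β]
    (Rel : (R × C × S) → (R × C × S) → Prop)
    (hsymm : ∀ p q, Rel p q → Rel q p)
    (h1 : ∀ c ∈ tri, ∃! p, p ∈ star ∧ Rel p c)
    (h2 : ∀ p ∈ star, ∃! q, q ∈ tri ∧ Rel q p)
    (pt ps : (R × C × S) → Prop)
    (hmem : ∀ c ∈ tri, ∀ p ∈ star, Rel p c → (pt c ↔ ps p))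
    (F G : (R × C × S) → β)
    (hval : ∀ c ∈ tri, ∀ p ∈ star, Rel p c → pt c → F c = G p) :
    ∑ c ∈ tri.filter pt, F c = ∑ p ∈ star.filter ps, G p := by
  refine Finset.sum_bij
    (i := fun c hc => (h1 c (Finset.mem_filter.1 hc).1).exists.choose) ?_ ?_ ?_ ?_
  · intro c hc
    obtain ⟨hct, hpt⟩ := Finset.mem_filter.1 hc
    obtain ⟨hmemstar, hrel⟩ := (h1 c hct).exists.choose_spec
    exact Finset.mem_filter.2 ⟨hmemstar, (hmem c hct _ hmemstar hrel).1 hpt⟩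
  · intro c1 hc1 c2 hc2 heq
    obtain ⟨hct1, -⟩ := Finset.mem_filter.1 hc1
    obtain ⟨hct2, -⟩ := Finset.mem_filter.1 hc2
    have heq' : (h1 c1 (Finset.mem_filter.1 hc1).1).exists.choose
        = (h1 c2 (Finset.mem_filter.1 hc2).1).exists.choose := heq
    obtain ⟨hs1, hr1⟩ := (h1 c1 (Finset.mem_filter.1 hc1).1).exists.choose_spec
    obtain ⟨hs2, hr2⟩ := (h1 c2 (Finset.mem_filter.1 hc2).1).exists.choose_spec
    rw [heq'] at hr1 hs1
    have u := h2 _ hs1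
    exact (u.unique ⟨hct1, hsymm _ _ hr1⟩ ⟨hct2, hsymm _ _ hr2⟩)
  · intro p hp
    obtain ⟨hps, hpsp⟩ := Finset.mem_filter.1 hp
    obtain ⟨hqt, hqr⟩ := (h2 p hps).exists.choose_spec
    set q := (h2 p hps).exists.choose with hqdef
    have hqf : q ∈ tri.filter pt :=
      Finset.mem_filter.2 ⟨hqt, (hmem q hqt p hps (hsymm _ _ hqr)).2 hpsp⟩
    refine ⟨q, hqf, ?_⟩
    obtain ⟨hs', hr'⟩ := (h1 q (Finset.mem_filter.1 hqf).1).exists.choose_spec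
    exact (h1 q (Finset.mem_filter.1 hqf).1).unique ⟨hs', hr'⟩ ⟨hps, hsymm _ _ hqr⟩
  · intro c hc
    obtain ⟨hct, hpt⟩ := Finset.mem_filter.1 hc
    obtain ⟨hs', hr'⟩ := (h1 c (Finset.mem_filter.1 hc).1).exists.choose_spec
    exact hval c hct _ hs' hr' hpt

end Aux3
section Aux4
set_option linter.unusedSectionVars false
open scoped Classical

variable {R C S : Type*} [DecidableEq R] [DecidableEq C] [DecidableEq S]
variable {star tri : Finset (R × C × S)} {a : R × C × S}
variable {f1 : R → ℚ} {f2 : C → ℚ} {f3 : S → ℚ}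

/-- Vertical-line crossing identity. -/
lemma id_vert (hlb : IsLatinBitrade star tri) (hsol : IsEqSolution star a f1 f2 f3)
    (α : ℝ) (hα : α ≠ 0) :
    (tri.filter fun c => ((f2 c.2.1 : ℝ) = α ∧ (f1 c.1 : ℝ) ≤ 0 ∧ α < (f3 c.2.2 : ℝ))).card
      = (tri.filter fun c =>
          ((f2 c.2.1 : ℝ) = α ∧ 0 < (f1 c.1 : ℝ) ∧ (f3 c.2.2 : ℝ) ≤ α)).card := by
  classical
  set φ : ℝ → ℤ := fun v => if 0 < v then 1 else 0 with hφ
  have hs1 : ∑ c ∈ tri.filter (fun c => (f2 c.2.1 : ℝ) = α), φ ((f3 c.2.2 : ℝ) - α)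
      = ∑ p ∈ star.filter (fun p => (f2 p.2.1 : ℝ) = α), φ ((f1 p.1 : ℝ)) := by
    refine sum_bij_rel (fun p q => p.2.1 = q.2.1 ∧ p.2.2 = q.2.2)
      (fun p q h => ⟨h.1.symm, h.2.symm⟩) hlb.r3c hlb.r2c _ _ ?_ _ _ ?_
    · intro c hc p hp hrel
      rw [hrel.1]
    · intro c hc p hp hrel hpt
      have hpa : p ≠ a := by
        intro h
        rw [h] at hrel
        rw [← hrel.1] at hpt
        rw [hsol.2.1] at hpt
        simp at hpt
        exact hα hpt.symm
      have heq := hsol.2.2.2 p hp hpa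
      have : (f1 p.1 : ℝ) + (f2 p.2.1 : ℝ) = (f3 p.2.2 : ℝ) := by exact_mod_cast heq
      rw [hrel.1, hrel.2] at this
      rw [hpt] at this
      have : (f1 p.1 : ℝ) = (f3 c.2.2 : ℝ) - α := by linarith
      rw [this]
  have hs2 : ∑ c ∈ tri.filter (fun c => (f2 c.2.1 : ℝ) = α), φ ((f1 c.1 : ℝ))
      = ∑ p ∈ star.filter (fun p => (f2 p.2.1 : ℝ) = α), φ ((f1 p.1 : ℝ)) := by
    refine sum_bij_rel (fun p q => p.1 = q.1 ∧ p.2.1 = q.2.1)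
      (fun p q h => ⟨h.1.symm, h.2.symm⟩) hlb.r3a hlb.r2a _ _ ?_ _ _ ?_
    · intro c hc p hp hrel
      rw [hrel.2]
    · intro c hc p hp hrel hpt
      rw [hrel.1]
  have hdiff : ∑ c ∈ tri.filter (fun c => (f2 c.2.1 : ℝ) = α),
      (φ ((f3 c.2.2 : ℝ) - α) - φ ((f1 c.1 : ℝ))) = 0 := by
    rw [Finset.sum_sub_distrib, hs1, hs2, sub_self]
  have hpoint : ∀ c ∈ tri.filter (fun c => (f2 c.2.1 : ℝ) = α),
      φ ((f3 c.2.2 : ℝ) - α) - φ ((f1 c.1 : ℝ))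
        = (if ((f1 c.1 : ℝ) ≤ 0 ∧ α < (f3 c.2.2 : ℝ)) then (1 : ℤ) else 0)
          - (if (0 < (f1 c.1 : ℝ) ∧ (f3 c.2.2 : ℝ) ≤ α) then (1 : ℤ) else 0) := by
    intro c _
    simp only [hφ, sub_pos]
    rcases le_or_gt (f1 c.1 : ℝ) 0 with h1 | h1 <;>
      rcases le_or_gt (f3 c.2.2 : ℝ) α with h3 | h3
    · rw [if_neg (not_lt.2 h3), if_neg (not_lt.2 h1),
        if_neg (fun h => absurd h.2 (not_lt.2 h3)),
        if_neg (fun h => absurd h.1 (not_lt.2 h1))]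
    · rw [if_pos h3, if_neg (not_lt.2 h1), if_pos ⟨h1, h3⟩,
        if_neg (fun h => absurd h.1 (not_lt.2 h1))]
    · rw [if_neg (not_lt.2 h3), if_pos h1,
        if_neg (fun h => absurd h.1 (not_le.2 h1)), if_pos ⟨h1, h3⟩]
    · rw [if_pos h3, if_pos h1, if_neg (fun h => absurd h.1 (not_le.2 h1)),
        if_neg (fun h => absurd h.2 (not_le.2 h3))]
      norm_num
  rw [Finset.sum_congr rfl hpoint, Finset.sum_sub_distrib,
    Finset.sum_boole, Finset.sum_boole, Finset.filter_filter, Finset.filter_filter] at hdiff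
  have := sub_eq_zero.1 hdiff
  exact_mod_cast this

end Aux4

section Aux5
set_option linter.unusedSectionVars false
open scoped Classical

variable {R C S : Type*} [DecidableEq R] [DecidableEq C] [DecidableEq S]
variable {star tri : Finset (R × C × S)} {a : R × C × S}
variable {f1 : R → ℚ} {f2 : C → ℚ} {f3 : S → ℚ}

/-- Diagonal-line crossing identity. -/
lemma id_diag (hlb : IsLatinBitrade star tri) (hsol : IsEqSolution star a f1 f2 f3)
    (α : ℝ) (hα : α ≠ 1) :
    (tri.filter fun c => ((f3 c.2.2 : ℝ) = α ∧ (f1 c.1 : ℝ) ≤ 0 ∧ (f2 c.2.1 : ℝ) < α)).card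
      = (tri.filter fun c =>
          ((f3 c.2.2 : ℝ) = α ∧ 0 < (f1 c.1 : ℝ) ∧ α ≤ (f2 c.2.1 : ℝ))).card := by
  classical
  set φ : ℝ → ℤ := fun v => if 0 < v then 1 else 0 with hφ
  have hs1 : ∑ c ∈ tri.filter (fun c => (f3 c.2.2 : ℝ) = α), φ (α - (f2 c.2.1 : ℝ))
      = ∑ p ∈ star.filter (fun p => (f3 p.2.2 : ℝ) = α), φ ((f1 p.1 : ℝ)) := by
    refine sum_bij_rel (fun p q => p.2.1 = q.2.1 ∧ p.2.2 = q.2.2)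
      (fun p q h => ⟨h.1.symm, h.2.symm⟩) hlb.r3c hlb.r2c _ _ ?_ _ _ ?_
    · intro c hc p hp hrel
      rw [hrel.2]
    · intro c hc p hp hrel hpt
      have hpa : p ≠ a := by
        intro h
        rw [h] at hrel
        rw [← hrel.2] at hpt
        rw [hsol.2.2.1] at hpt
        exact hα (by exact_mod_cast hpt.symm)
      have heq := hsol.2.2.2 p hp hpa
      have heq' : (f1 p.1 : ℝ) + (f2 p.2.1 : ℝ) = (f3 p.2.2 : ℝ) := by exact_mod_cast heq
      rw [hrel.1, hrel.2] at heq'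
      rw [hpt] at heq'
      have : (f1 p.1 : ℝ) = α - (f2 c.2.1 : ℝ) := by linarith
      rw [this]
  have hs2 : ∑ c ∈ tri.filter (fun c => (f3 c.2.2 : ℝ) = α), φ ((f1 c.1 : ℝ))
      = ∑ p ∈ star.filter (fun p => (f3 p.2.2 : ℝ) = α), φ ((f1 p.1 : ℝ)) := by
    refine sum_bij_rel (fun p q => p.1 = q.1 ∧ p.2.2 = q.2.2)
      (fun p q h => ⟨h.1.symm, h.2.symm⟩) hlb.r3b hlb.r2b _ _ ?_ _ _ ?_
    · intro c hc p hp hrel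
      rw [hrel.2]
    · intro c hc p hp hrel hpt
      rw [hrel.1]
  have hdiff : ∑ c ∈ tri.filter (fun c => (f3 c.2.2 : ℝ) = α),
      (φ (α - (f2 c.2.1 : ℝ)) - φ ((f1 c.1 : ℝ))) = 0 := by
    rw [Finset.sum_sub_distrib, hs1, hs2, sub_self]
  have hpoint : ∀ c ∈ tri.filter (fun c => (f3 c.2.2 : ℝ) = α),
      φ (α - (f2 c.2.1 : ℝ)) - φ ((f1 c.1 : ℝ))
        = (if ((f1 c.1 : ℝ) ≤ 0 ∧ (f2 c.2.1 : ℝ) < α) then (1 : ℤ) else 0)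
          - (if (0 < (f1 c.1 : ℝ) ∧ α ≤ (f2 c.2.1 : ℝ)) then (1 : ℤ) else 0) := by
    intro c _
    simp only [hφ, sub_pos]
    rcases le_or_gt (f1 c.1 : ℝ) 0 with h1 | h1 <;>
      rcases le_or_gt α (f2 c.2.1 : ℝ) with h3 | h3
    · rw [if_neg (not_lt.2 h3), if_neg (not_lt.2 h1),
        if_neg (fun h => absurd h.2 (not_lt.2 h3)),
        if_neg (fun h => absurd h.1 (not_lt.2 h1))]
    · rw [if_pos h3, if_neg (not_lt.2 h1), if_pos ⟨h1, h3⟩,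
        if_neg (fun h => absurd h.1 (not_lt.2 h1))]
    · rw [if_neg (not_lt.2 h3), if_pos h1,
        if_neg (fun h => absurd h.1 (not_le.2 h1)), if_pos ⟨h1, h3⟩]
    · rw [if_pos h3, if_pos h1, if_neg (fun h => absurd h.1 (not_le.2 h1)),
        if_neg (fun h => absurd h.2 (not_le.2 h3))]
      norm_num
  rw [Finset.sum_congr rfl hpoint, Finset.sum_sub_distrib,
    Finset.sum_boole, Finset.sum_boole, Finset.filter_filter, Finset.filter_filter] at hdiff
  have := sub_eq_zero.1 hdiff
  exact_mod_cast this

end Aux5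
section Aux6
set_option linter.unusedSectionVars false
open scoped Classical

variable {R C S : Type*} [DecidableEq R] [DecidableEq C] [DecidableEq S]
variable {f1 : R → ℚ} {f2 : C → ℚ} {f3 : S → ℚ}

lemma exists_pos_lt_all (V : Finset ℝ) : ∃ δ : ℝ, 0 < δ ∧ ∀ v ∈ V, 0 < v → δ < v := by
  classical
  set W := insert (1:ℝ) (V.filter (fun v => 0 < v)) with hWdef
  have hW : W.Nonempty := ⟨1, Finset.mem_insert_self _ _⟩
  refine ⟨W.min' hW / 2, ?_, ?_⟩
  · have : 0 < W.min' hW := by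
      rcases Finset.mem_insert.1 (W.min'_mem hW) with h | h
      · rw [h]; norm_num
      · exact (Finset.mem_filter.1 h).2
    linarith
  · intro v hv hv0
    have : W.min' hW ≤ v :=
      Finset.min'_le _ _ (Finset.mem_insert_of_mem (Finset.mem_filter.2 ⟨hv, hv0⟩))
    linarith

lemma card_filter_or2 {γ : Type*} [DecidableEq γ] (s : Finset γ) (p q : γ → Prop)
    [DecidablePred p] [DecidablePred q] [DecidablePred (fun c => p c ∨ q c)]
    (hdisj : ∀ c, p c → q c → False) :
    (s.filter fun c => p c ∨ q c).card = (s.filter p).card + (s.filter q).card := by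
  have h : s.filter (fun c => p c ∨ q c) = s.filter p ∪ s.filter q := by
    ext c
    simp only [Finset.mem_filter, Finset.mem_union]
    tauto
  rw [h]
  exact Finset.card_union_of_disjoint (Finset.disjoint_left.2
    (fun c hc hc' => hdisj c (Finset.mem_filter.1 hc).2 (Finset.mem_filter.1 hc').2))

/-- Master membership lemma for points near `(α, 0)`. -/
lemma mem_int_region (c : R × C × S) (α x y : ℝ)
    (hy0 : 0 < y)
    (hy1 : 0 < (f1 c.1 : ℝ) → y < (f1 c.1 : ℝ))
    (hx1 : (f2 c.2.1 : ℝ) < α → (f2 c.2.1 : ℝ) < x)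
    (hx2 : α < (f2 c.2.1 : ℝ) → x < (f2 c.2.1 : ℝ))
    (hs1 : (f3 c.2.2 : ℝ) < α → (f3 c.2.2 : ℝ) < x + y)
    (hs2 : α < (f3 c.2.2 : ℝ) → x + y < (f3 c.2.2 : ℝ)) :
    ((x, y) ∈ interior (DeltaOf f1 f2 f3 c)) ↔
      ((((f1 c.1 : ℝ) ≤ 0 ∧ (f2 c.2.1 : ℝ) < α ∧ α < (f3 c.2.2 : ℝ)) ∨
          (0 < (f1 c.1 : ℝ) ∧ α < (f2 c.2.1 : ℝ) ∧ (f3 c.2.2 : ℝ) < α)) ∨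
        (((f2 c.2.1 : ℝ) = α ∧ (f1 c.1 : ℝ) ≤ 0 ∧ α < (f3 c.2.2 : ℝ)) ∧ α < x) ∨
        (((f2 c.2.1 : ℝ) = α ∧ 0 < (f1 c.1 : ℝ) ∧ (f3 c.2.2 : ℝ) < α) ∧ x < α) ∨
        (((f3 c.2.2 : ℝ) = α ∧ 0 < (f1 c.1 : ℝ) ∧ α < (f2 c.2.1 : ℝ)) ∧ α < x + y) ∨
        (((f3 c.2.2 : ℝ) = α ∧ (f1 c.1 : ℝ) ≤ 0 ∧ (f2 c.2.1 : ℝ) < α) ∧ x + y < α) ∨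
        (((f2 c.2.1 : ℝ) = α ∧ 0 < (f1 c.1 : ℝ) ∧ (f3 c.2.2 : ℝ) = α) ∧ x < α ∧ α < x + y)) := by
  rw [DeltaOf, interior_DeltaT_eq]
  set r1 : ℝ := (f1 c.1 : ℝ) with hr1
  set r2 : ℝ := (f2 c.2.1 : ℝ) with hr2
  set r3 : ℝ := (f3 c.2.2 : ℝ) with hr3
  show ((r1 + r2 < r3 ∧ r1 < y ∧ r2 < x ∧ x + y < r3) ∨
      (r3 < r1 + r2 ∧ y < r1 ∧ x < r2 ∧ r3 < x + y)) ↔ _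
  constructor
  · rintro (⟨hud, hy, hx, hs⟩ | ⟨hud, hy, hx, hs⟩)
    · have h1 : r1 ≤ 0 := by
        by_contra h
        exact absurd hy (not_lt.2 (le_of_lt (hy1 (lt_of_not_ge h))))
      rcases lt_trichotomy r2 α with h2 | h2 | h2
      · rcases lt_trichotomy r3 α with h3 | h3 | h3
        · exact absurd hs (not_lt.2 (le_of_lt (hs1 h3)))
        · exact Or.inr (Or.inr (Or.inr (Or.inr (Or.inl ⟨⟨h3, h1, h2⟩, by rw [← h3]; exact hs⟩))))
        · exact Or.inl (Or.inl ⟨h1, h2, h3⟩)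
      · rcases lt_trichotomy r3 α with h3 | h3 | h3
        · exact absurd hs (not_lt.2 (le_of_lt (hs1 h3)))
        · exact absurd (lt_trans (lt_of_le_of_lt (by linarith : α ≤ x) (by linarith : x < x + y)) (by rw [← h3] at *; exact hs)) (lt_irrefl _)
        · exact Or.inr (Or.inl ⟨⟨h2, h1, h3⟩, by rw [← h2]; exact hx⟩)
      · exact absurd hx (not_lt.2 (le_of_lt (hx2 h2)))
    · have h1 : 0 < r1 := lt_trans hy0 hy
      rcases lt_trichotomy r2 α with h2 | h2 | h2
      · exact absurd hx (not_lt.2 (le_of_lt (hx1 h2)))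
      · rcases lt_trichotomy r3 α with h3 | h3 | h3
        · exact Or.inr (Or.inr (Or.inl ⟨⟨h2, h1, h3⟩, by rw [← h2]; exact hx⟩))
        · exact Or.inr (Or.inr (Or.inr (Or.inr (Or.inr ⟨⟨h2, h1, h3⟩, by rw [← h2]; exact hx, by rw [← h3]; exact hs⟩))))
        · exact absurd hs (not_lt.2 (le_of_lt (hs2 h3)))
      · rcases lt_trichotomy r3 α with h3 | h3 | h3
        · exact Or.inl (Or.inr ⟨h1, h2, h3⟩)
        · exact Or.inr (Or.inr (Or.inr (Or.inl ⟨⟨h3, h1, h2⟩, by rw [← h3]; exact hs⟩)))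
        · exact absurd hs (not_lt.2 (le_of_lt (hs2 h3)))
  · rintro ((⟨h1, h2, h3⟩ | ⟨h1, h2, h3⟩) | ⟨⟨h2, h1, h3⟩, hx⟩ | ⟨⟨h2, h1, h3⟩, hx⟩ |
      ⟨⟨h3, h1, h2⟩, hs⟩ | ⟨⟨h3, h1, h2⟩, hs⟩ | ⟨⟨h2, h1, h3⟩, hx, hs⟩)
    · exact Or.inl ⟨by linarith, by linarith, hx1 h2, hs2 h3⟩
    · exact Or.inr ⟨by linarith, hy1 h1, hx2 h2, hs1 h3⟩
    · exact Or.inl ⟨by linarith, by linarith, by linarith, hs2 h3⟩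
    · exact Or.inr ⟨by linarith, hy1 h1, by linarith, hs1 h3⟩
    · exact Or.inr ⟨by linarith, hy1 h1, hx2 h2, by linarith⟩
    · exact Or.inl ⟨by linarith, by linarith, hx1 h2, by linarith⟩
    · exact Or.inr ⟨by linarith, hy1 h1, by linarith, by linarith⟩

end Aux6

section Aux7
set_option linter.unusedSectionVars false
set_option maxHeartbeats 1000000
open scoped Classical

variable {R C S : Type*} [DecidableEq R] [DecidableEq C] [DecidableEq S]

/-- Core: the minimal point of `closure Γ̂` cannot be an interior point of the
bottom side of `Σ`. -/
lemma core_bottom (star tri : Finset (R × C × S)) (hlb : IsLatinBitrade star tri)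
    (a : R × C × S) (ha : a ∈ star)
    (f1 : R → ℚ) (f2 : C → ℚ) (f3 : S → ℚ)
    (hsol : IsEqSolution star a f1 f2 f3)
    (P : ℝ × ℝ)
    (hP : P ∈ closure (GammaHat tri f1 f2 f3))
    (hPmin : ∀ Q ∈ closure (GammaHat tri f1 f2 f3), Q ≠ P → ptOrder P Q)
    (hP2 : P.2 = 0) (hP1a : 0 < P.1) (hP1b : P.1 < 1) : False := by
  classical
  set α : ℝ := P.1 with hα
  obtain ⟨ρ0, hρ0pos, hρ0⟩ := exists_pos_lt_all
    (((tri.image fun c => |(f1 c.1 : ℝ)|) ∪ (tri.image fun c => |(f2 c.2.1 : ℝ) - α|) ∪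
      (tri.image fun c => |(f3 c.2.2 : ℝ) - α|)) ∪ {α})
  set ρ : ℝ := ρ0 / 2 with hρdef
  have hρpos : 0 < ρ := by positivity
  have hρρ0 : ρ < ρ0 := by linarith
  have hρα : ρ < α := by
    have := hρ0 α (by simp) hP1a
    linarith
  have hv1 : ∀ c ∈ tri, 0 < (f1 c.1 : ℝ) → ρ0 < (f1 c.1 : ℝ) := by
    intro c hc h
    have := hρ0 |(f1 c.1 : ℝ)| (by
      apply Finset.mem_union_left
      apply Finset.mem_union_left
      apply Finset.mem_union_left
      exact Finset.mem_image_of_mem _ hc) (abs_pos.2 (ne_of_gt h))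
    rwa [abs_of_pos h] at this
  have hv2 : ∀ c ∈ tri, (f2 c.2.1 : ℝ) ≠ α → ρ0 < |(f2 c.2.1 : ℝ) - α| := by
    intro c hc h
    exact hρ0 _ (by
      apply Finset.mem_union_left
      apply Finset.mem_union_left
      apply Finset.mem_union_right
      exact Finset.mem_image_of_mem _ hc) (abs_pos.2 (sub_ne_zero.2 h))
  have hv3 : ∀ c ∈ tri, (f3 c.2.2 : ℝ) ≠ α → ρ0 < |(f3 c.2.2 : ℝ) - α| := by
    intro c hc h
    exact hρ0 _ (by
      apply Finset.mem_union_left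
      apply Finset.mem_union_right
      exact Finset.mem_image_of_mem _ hc) (abs_pos.2 (sub_ne_zero.2 h))
  have hregion : ∀ x y : ℝ, |x - α| < ρ → 0 < y → y < ρ → ∀ c ∈ tri,
      ((x, y) ∈ interior (DeltaOf f1 f2 f3 c)) ↔
      ((((f1 c.1 : ℝ) ≤ 0 ∧ (f2 c.2.1 : ℝ) < α ∧ α < (f3 c.2.2 : ℝ)) ∨
          (0 < (f1 c.1 : ℝ) ∧ α < (f2 c.2.1 : ℝ) ∧ (f3 c.2.2 : ℝ) < α)) ∨
        (((f2 c.2.1 : ℝ) = α ∧ (f1 c.1 : ℝ) ≤ 0 ∧ α < (f3 c.2.2 : ℝ)) ∧ α < x) ∨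
        (((f2 c.2.1 : ℝ) = α ∧ 0 < (f1 c.1 : ℝ) ∧ (f3 c.2.2 : ℝ) < α) ∧ x < α) ∨
        (((f3 c.2.2 : ℝ) = α ∧ 0 < (f1 c.1 : ℝ) ∧ α < (f2 c.2.1 : ℝ)) ∧ α < x + y) ∨
        (((f3 c.2.2 : ℝ) = α ∧ (f1 c.1 : ℝ) ≤ 0 ∧ (f2 c.2.1 : ℝ) < α) ∧ x + y < α) ∨
        (((f2 c.2.1 : ℝ) = α ∧ 0 < (f1 c.1 : ℝ) ∧ (f3 c.2.2 : ℝ) = α) ∧ x < α ∧ α < x + y)) := by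
    intro x y hx hy0 hyρ c hc
    have hxl : α - ρ < x := by have := abs_lt.1 hx; linarith [this.1]
    have hxr : x < α + ρ := by have := abs_lt.1 hx; linarith [this.2]
    apply mem_int_region c α x y hy0
    · intro h; have := hv1 c hc h; linarith
    · intro h
      have h2 := hv2 c hc (ne_of_lt h)
      rw [abs_of_neg (by linarith)] at h2
      linarith
    · intro h
      have h2 := hv2 c hc (ne_of_gt h)
      rw [abs_of_pos (by linarith)] at h2
      linarith
    · intro h
      have h2 := hv3 c hc (ne_of_lt h)
      rw [abs_of_neg (by linarith)] at h2
      linarith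
    · intro h
      have h2 := hv3 c hc (ne_of_gt h)
      rw [abs_of_pos (by linarith)] at h2
      linarith
  set pK : (R × C × S) → Prop := fun c =>
    (((f1 c.1 : ℝ) ≤ 0 ∧ (f2 c.2.1 : ℝ) < α ∧ α < (f3 c.2.2 : ℝ)) ∨
      (0 < (f1 c.1 : ℝ) ∧ α < (f2 c.2.1 : ℝ) ∧ (f3 c.2.2 : ℝ) < α)) with hpK
  set pA : (R × C × S) → Prop := fun c =>
    ((f2 c.2.1 : ℝ) = α ∧ (f1 c.1 : ℝ) ≤ 0 ∧ α < (f3 c.2.2 : ℝ)) with hpA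
  set pB : (R × C × S) → Prop := fun c =>
    ((f2 c.2.1 : ℝ) = α ∧ 0 < (f1 c.1 : ℝ) ∧ (f3 c.2.2 : ℝ) < α) with hpB
  set pC : (R × C × S) → Prop := fun c =>
    ((f3 c.2.2 : ℝ) = α ∧ 0 < (f1 c.1 : ℝ) ∧ α < (f2 c.2.1 : ℝ)) with hpC
  set pD : (R × C × S) → Prop := fun c =>
    ((f3 c.2.2 : ℝ) = α ∧ (f1 c.1 : ℝ) ≤ 0 ∧ (f2 c.2.1 : ℝ) < α) with hpD
  set pE : (R × C × S) → Prop := fun c =>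
    ((f2 c.2.1 : ℝ) = α ∧ 0 < (f1 c.1 : ℝ) ∧ (f3 c.2.2 : ℝ) = α) with hpE
  -- disjointness facts
  have dKA : ∀ c, pK c → pA c → False := by
    rintro c (⟨_, h, _⟩ | ⟨_, h, _⟩) hq
    · exact (ne_of_lt h) hq.1
    · exact (ne_of_gt h) hq.1
  have dKB : ∀ c, pK c → pB c → False := by
    rintro c (⟨_, h, _⟩ | ⟨_, h, _⟩) hq
    · exact (ne_of_lt h) hq.1
    · exact (ne_of_gt h) hq.1
  have dKE : ∀ c, pK c → pE c → False := by
    rintro c (⟨_, h, _⟩ | ⟨_, h, _⟩) hq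
    · exact (ne_of_lt h) hq.1
    · exact (ne_of_gt h) hq.1
  have dKC : ∀ c, pK c → pC c → False := by
    rintro c (⟨_, _, h⟩ | ⟨_, _, h⟩) hq
    · exact (ne_of_gt h) hq.1
    · exact (ne_of_lt h) hq.1
  have dKD : ∀ c, pK c → pD c → False := by
    rintro c (⟨_, _, h⟩ | ⟨_, _, h⟩) hq
    · exact (ne_of_gt h) hq.1
    · exact (ne_of_lt h) hq.1
  have dAC : ∀ c, pA c → pC c → False := fun c h1 h2 => absurd h1.2.1 (not_le.2 h2.2.1)
  have dBD : ∀ c, pB c → pD c → False := fun c h1 h2 => (ne_of_lt h1.2.2) h2.1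
  have dBC : ∀ c, pB c → pC c → False := fun c h1 h2 => (ne_of_lt h1.2.2) h2.1
  have dBE : ∀ c, pB c → pE c → False := fun c h1 h2 => (ne_of_lt h1.2.2) h2.2.2
  have dCE : ∀ c, pC c → pE c → False := fun c h1 h2 => (ne_of_gt h1.2.2) h2.1
  set K := (tri.filter pK).card with hK
  set A := (tri.filter pA).card with hA
  set B := (tri.filter pB).card with hB
  set CC := (tri.filter pC).card with hCC
  set D := (tri.filter pD).card with hD
  set E := (tri.filter pE).card with hE
  -- Identity 1 : A = B + E
  have hid1 : A = B + E := by
    have h0 := id_vert (a := a) hlb hsol α (ne_of_gt hP1a)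
    have hsplit : (tri.filter fun c =>
        ((f2 c.2.1 : ℝ) = α ∧ 0 < (f1 c.1 : ℝ) ∧ (f3 c.2.2 : ℝ) ≤ α))
        = tri.filter fun c => pB c ∨ pE c := by
      apply Finset.filter_congr
      intro c _
      constructor
      · rintro ⟨h1, h2, h3⟩
        rcases lt_or_eq_of_le h3 with h | h
        · exact Or.inl ⟨h1, h2, h⟩
        · exact Or.inr ⟨h1, h2, h⟩
      · rintro (⟨h1, h2, h3⟩ | ⟨h1, h2, h3⟩)
        · exact ⟨h1, h2, le_of_lt h3⟩
        · exact ⟨h1, h2, le_of_eq h3⟩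
    rw [hsplit] at h0
    exact h0.trans (card_filter_or2 _ _ _ dBE)
  -- Identity 2 : D = CC + E
  have hid2 : D = CC + E := by
    have h0 := id_diag (a := a) hlb hsol α (ne_of_lt hP1b)
    have hsplit : (tri.filter fun c =>
        ((f3 c.2.2 : ℝ) = α ∧ 0 < (f1 c.1 : ℝ) ∧ α ≤ (f2 c.2.1 : ℝ)))
        = tri.filter fun c => pC c ∨ pE c := by
      apply Finset.filter_congr
      intro c _
      constructor
      · rintro ⟨h1, h2, h3⟩
        rcases lt_or_eq_of_le h3 with h | h
        · exact Or.inl ⟨h1, h2, h⟩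
        · exact Or.inr ⟨h.symm, h2, h1⟩
      · rintro (⟨h1, h2, h3⟩ | ⟨h1, h2, h3⟩)
        · exact ⟨h1, h2, le_of_lt h3⟩
        · exact ⟨h3, h2, le_of_eq h1.symm⟩
    rw [hsplit] at h0
    exact h0.trans (card_filter_or2 _ _ _ dCE)
  -- anchor point W
  obtain ⟨x₀, hx₀⟩ := ((Set.Ioo_infinite (show α - ρ < α by linarith)).diff
    (tri.image fun c => ((f2 c.2.1 : ℝ))).finite_toSet).nonempty
  obtain ⟨hx₀I, hx₀not⟩ := hx₀
  obtain ⟨hx₀l, hx₀r⟩ := hx₀I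
  have hx₀pos : 0 < x₀ := by linarith
  obtain ⟨y₀, hy₀⟩ := ((Set.Ioo_infinite (show (0:ℝ) < min ρ (α - x₀) from
      lt_min hρpos (by linarith))).diff
    ((tri.image fun c => ((f1 c.1 : ℝ))) ∪
      (tri.image fun c => ((f3 c.2.2 : ℝ) - x₀))).finite_toSet).nonempty
  obtain ⟨hy₀I, hy₀not⟩ := hy₀
  obtain ⟨hy₀l, hy₀r⟩ := hy₀I
  have hy₀ρ : y₀ < ρ := lt_of_lt_of_le hy₀r (min_le_left _ _)
  have hy₀s : x₀ + y₀ < α := by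
    have := lt_of_lt_of_le hy₀r (min_le_right _ _)
    linarith
  have hWx : |x₀ - α| < ρ := by
    rw [abs_of_neg (by linarith)]
    linarith
  have hWSig : ((x₀, y₀) : ℝ × ℝ) ∈ interior SigmaT := by
    rw [interior_SigmaT_eq]
    exact ⟨hx₀pos, hy₀l, by dsimp only; linarith⟩
  have hWPi : ((x₀, y₀) : ℝ × ℝ) ∉ PiSet tri f1 f2 f3 := by
    intro hmem
    rw [PiSet, Set.mem_iUnion] at hmem
    obtain ⟨c, hc⟩ := hmem
    rw [Set.mem_iUnion] at hc
    obtain ⟨hctri, hside⟩ := hc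
    rcases hside with (hs | hs) | hs
    · have := snd_of_horiz hs
      simp only at this
      apply hy₀not
      simp only [Finset.coe_union, Set.mem_union, Finset.coe_image, Set.mem_image,
        Finset.mem_coe]
      exact Or.inl ⟨c, hctri, this.symm⟩
    · have := fst_of_vert hs
      simp only at this
      apply hx₀not
      simp only [Finset.coe_image, Set.mem_image, Finset.mem_coe]
      exact ⟨c, hctri, this.symm⟩
    · have := sum_of_diag hs (by ring) rfl
      simp only at this
      apply hy₀not
      simp only [Finset.coe_union, Set.mem_union, Finset.coe_image, Set.mem_image,
        Finset.mem_coe]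
      exact Or.inr ⟨c, hctri, by linarith⟩
  have hWGam : ((x₀, y₀) : ℝ × ℝ) ∈ GammaSet tri f1 f2 f3 := ⟨hWSig, hWPi⟩
  have hπW : piCount tri f1 f2 f3 (x₀, y₀) = 1 := by
    by_contra hne1
    have hmemhat : ((x₀, y₀) : ℝ × ℝ) ∈ GammaHat tri f1 f2 f3 := ⟨hWGam, hne1⟩
    have hne : ((x₀, y₀) : ℝ × ℝ) ≠ P := by
      intro h
      have : y₀ = P.2 := by rw [← h]
      rw [hP2] at this
      linarith
    rcases hPmin _ (subset_closure hmemhat) hne with h | h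
    · rw [hP2] at h
      simp only at h
      rw [← hα] at h
      linarith
    · rw [hP2] at h
      obtain ⟨h, -⟩ := h
      simp only at h
      rw [← hα] at h
      linarith
  -- compute π(W) = K + B + D
  have hcongrW : ∀ c ∈ tri, ((x₀, y₀) ∈ interior (DeltaOf f1 f2 f3 c)) ↔
      (pK c ∨ pB c ∨ pD c) := by
    intro c hc
    rw [hregion x₀ y₀ hWx hy₀l hy₀ρ c hc]
    constructor
    · rintro (h | ⟨h, hcc⟩ | ⟨h, hcc⟩ | ⟨h, hcc⟩ | ⟨h, hcc⟩ | ⟨h, hcc1, hcc2⟩)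
      · exact Or.inl h
      · exact absurd hcc (not_lt.2 (le_of_lt hx₀r))
      · exact Or.inr (Or.inl h)
      · exact absurd hcc (not_lt.2 (le_of_lt hy₀s))
      · exact Or.inr (Or.inr h)
      · exact absurd hcc2 (not_lt.2 (le_of_lt hy₀s))
    · rintro (h | h | h)
      · exact Or.inl h
      · exact Or.inr (Or.inr (Or.inl ⟨h, hx₀r⟩))
      · exact Or.inr (Or.inr (Or.inr (Or.inr (Or.inl ⟨h, hy₀s⟩))))
  have hKBD : K + (B + D) = 1 := by
    have s1 := card_filter_or2 tri pK (fun c => pB c ∨ pD c) (fun c h1 h2 => by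
      rcases h2 with h2 | h2
      · exact dKB c h1 h2
      · exact dKD c h1 h2)
    have s2 := card_filter_or2 tri pB pD dBD
    rw [← hπW, piCount_eq_card, Finset.filter_congr hcongrW, s1, s2]
  -- now take a point of Γ̂ near P
  rw [Metric.mem_closure_iff] at hP
  obtain ⟨X, hXhat, hXdist⟩ := hP ρ hρpos
  obtain ⟨x, y⟩ := X
  have hdx : |x - α| < ρ := by
    rw [Prod.dist_eq] at hXdist
    have := lt_of_le_of_lt (le_max_left _ _) hXdist
    rw [Real.dist_eq, ← hα] at this
    rwa [abs_sub_comm]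
  have hdy : |y - P.2| < ρ := by
    rw [Prod.dist_eq] at hXdist
    have := lt_of_le_of_lt (le_max_right _ _) hXdist
    rw [Real.dist_eq] at this
    rwa [abs_sub_comm]
  obtain ⟨hXGam, hXπ⟩ := hXhat
  obtain ⟨hXSig, hXPi⟩ := hXGam
  rw [interior_SigmaT_eq] at hXSig
  obtain ⟨hx0, hy0, hsum1⟩ := hXSig
  simp only at hx0 hy0 hsum1
  have hyρ : y < ρ := by
    rw [hP2] at hdy
    rw [abs_of_pos (by simpa using hy0)] at hdy
    simpa using hdy
  have hy0' : (0:ℝ) < y := by simpa using hy0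
  rcases lt_trichotomy x α with hxα | hxα | hxα
  · rcases lt_trichotomy (x + y) α with hsα | hsα | hsα
    · -- π = K + B + D = 1, contradiction with π ≠ 1
      apply hXπ
      have hcongr : ∀ c ∈ tri, ((x, y) ∈ interior (DeltaOf f1 f2 f3 c)) ↔
          (pK c ∨ pB c ∨ pD c) := by
        intro c hc
        rw [hregion x y hdx hy0' hyρ c hc]
        constructor
        · rintro (h | ⟨h, hcc⟩ | ⟨h, hcc⟩ | ⟨h, hcc⟩ | ⟨h, hcc⟩ | ⟨h, hcc1, hcc2⟩)
          · exact Or.inl h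
          · exact absurd hcc (not_lt.2 (le_of_lt hxα))
          · exact Or.inr (Or.inl h)
          · exact absurd hcc (not_lt.2 (le_of_lt hsα))
          · exact Or.inr (Or.inr h)
          · exact absurd hcc2 (not_lt.2 (le_of_lt hsα))
        · rintro (h | h | h)
          · exact Or.inl h
          · exact Or.inr (Or.inr (Or.inl ⟨h, hxα⟩))
          · exact Or.inr (Or.inr (Or.inr (Or.inr (Or.inl ⟨h, hsα⟩))))
      have s1 := card_filter_or2 tri pK (fun c => pB c ∨ pD c) (fun c h1 h2 => by
        rcases h2 with h2 | h2
        · exact dKB c h1 h2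
        · exact dKD c h1 h2)
      have s2 := card_filter_or2 tri pB pD dBD
      rw [piCount_eq_card, Finset.filter_congr hcongr, s1, s2]
      exact hKBD
    · -- x + y = α : either D = 0 (π = K + B = 1) or a diagonal side passes through X
      by_cases hDz : D = 0
      · apply hXπ
        have hcongr : ∀ c ∈ tri, ((x, y) ∈ interior (DeltaOf f1 f2 f3 c)) ↔
            (pK c ∨ pB c) := by
          intro c hc
          rw [hregion x y hdx hy0' hyρ c hc]
          constructor
          · rintro (h | ⟨h, hcc⟩ | ⟨h, hcc⟩ | ⟨h, hcc⟩ | ⟨h, hcc⟩ | ⟨h, hcc1, hcc2⟩)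
            · exact Or.inl h
            · exact absurd hcc (not_lt.2 (le_of_lt hxα))
            · exact Or.inr h
            · exact absurd hcc (not_lt.2 (le_of_eq hsα))
            · exact absurd hcc (not_lt.2 (le_of_eq hsα.symm))
            · exact absurd hcc2 (not_lt.2 (le_of_eq hsα))
          · rintro (h | h)
            · exact Or.inl h
            · exact Or.inr (Or.inr (Or.inl ⟨h, hxα⟩))
        have s1 := card_filter_or2 tri pK pB dKB
        rw [piCount_eq_card, Finset.filter_congr hcongr, s1]
        omega
      · -- D > 0 : obtain c with pD c, then X lies on its diagonal side
        have : (tri.filter pD).Nonempty := by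
          rw [← Finset.card_pos]
          omega
        obtain ⟨c, hcmem⟩ := this
        obtain ⟨hctri, hpd⟩ := Finset.mem_filter.1 hcmem
        obtain ⟨h3, h1, h2⟩ := hpd
        apply hXPi
        apply mem_PiSet_of_side hctri
        right; right
        rw [sideD]
        have hy1 : (f1 c.1 : ℝ) ≤ y := le_trans h1 (le_of_lt hy0')
        have hfx : (f2 c.2.1 : ℝ) < x := by
          have h2' := hv2 c hctri (ne_of_lt h2)
          rw [abs_of_neg (by linarith)] at h2'
          have := (abs_lt.1 hdx).1
          linarith
        have hy2 : y ≤ (f3 c.2.2 : ℝ) - (f2 c.2.1 : ℝ) := by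
          rw [h3]
          linarith
        have := diag_mem_segment hy1 hy2
        have hXeq : ((x, y) : ℝ × ℝ) = ((f3 c.2.2 : ℝ) - y, y) := by
          rw [Prod.mk.injEq]
          exact ⟨by rw [h3]; linarith, rfl⟩
        rwa [hXeq]
    · -- x < α < x + y : π = K + B + CC + E = 1
      apply hXπ
      have hcongr : ∀ c ∈ tri, ((x, y) ∈ interior (DeltaOf f1 f2 f3 c)) ↔
          (pK c ∨ pB c ∨ pC c ∨ pE c) := by
        intro c hc
        rw [hregion x y hdx hy0' hyρ c hc]
        constructor
        · rintro (h | ⟨h, hcc⟩ | ⟨h, hcc⟩ | ⟨h, hcc⟩ | ⟨h, hcc⟩ | ⟨h, hcc1, hcc2⟩)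
          · exact Or.inl h
          · exact absurd hcc (not_lt.2 (le_of_lt hxα))
          · exact Or.inr (Or.inl h)
          · exact Or.inr (Or.inr (Or.inl h))
          · exact absurd hcc (not_lt.2 (le_of_lt hsα))
          · exact Or.inr (Or.inr (Or.inr h))
        · rintro (h | h | h | h)
          · exact Or.inl h
          · exact Or.inr (Or.inr (Or.inl ⟨h, hxα⟩))
          · exact Or.inr (Or.inr (Or.inr (Or.inl ⟨h, hsα⟩)))
          · exact Or.inr (Or.inr (Or.inr (Or.inr (Or.inr ⟨h, hxα, hsα⟩))))
      have s1 := card_filter_or2 tri pK (fun c => pB c ∨ pC c ∨ pE c) (fun c h1 h2 => by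
        rcases h2 with h2 | h2 | h2
        · exact dKB c h1 h2
        · exact dKC c h1 h2
        · exact dKE c h1 h2)
      have s2 := card_filter_or2 tri pB (fun c => pC c ∨ pE c) (fun c h1 h2 => by
        rcases h2 with h2 | h2
        · exact dBC c h1 h2
        · exact dBE c h1 h2)
      have s3 := card_filter_or2 tri pC pE dCE
      rw [piCount_eq_card, Finset.filter_congr hcongr, s1, s2, s3]
      omega
  · -- x = α : either B = E = 0 (π = K + CC = 1) or a vertical side passes through X
    have hsα : α < x + y := by rw [← hxα]; linarith
    by_cases hBEz : B + E = 0
    · apply hXπ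
      have hcongr : ∀ c ∈ tri, ((x, y) ∈ interior (DeltaOf f1 f2 f3 c)) ↔
          (pK c ∨ pC c) := by
        intro c hc
        rw [hregion x y hdx hy0' hyρ c hc]
        constructor
        · rintro (h | ⟨h, hcc⟩ | ⟨h, hcc⟩ | ⟨h, hcc⟩ | ⟨h, hcc⟩ | ⟨h, hcc1, hcc2⟩)
          · exact Or.inl h
          · exact absurd hcc (not_lt.2 (le_of_eq hxα))
          · exact absurd hcc (not_lt.2 (le_of_eq hxα.symm))
          · exact Or.inr h
          · exact absurd hcc (not_lt.2 (le_of_lt hsα))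
          · exact absurd hcc1 (not_lt.2 (le_of_eq hxα.symm))
        · rintro (h | h)
          · exact Or.inl h
          · exact Or.inr (Or.inr (Or.inr (Or.inl ⟨h, hsα⟩)))
      have s1 := card_filter_or2 tri pK pC dKC
      rw [piCount_eq_card, Finset.filter_congr hcongr, s1]
      omega
    · have : (tri.filter (fun c => pB c ∨ pE c)).Nonempty := by
        rw [← Finset.card_pos, card_filter_or2 _ _ _ dBE]
        omega
      obtain ⟨c, hcmem⟩ := this
      obtain ⟨hctri, hbe⟩ := Finset.mem_filter.1 hcmem
      have h2 : (f2 c.2.1 : ℝ) = α := by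
        rcases hbe with h | h
        · exact h.1
        · exact h.1
      have h1 : 0 < (f1 c.1 : ℝ) := by
        rcases hbe with h | h
        · exact h.2.1
        · exact h.2.1
      have h3 : (f3 c.2.2 : ℝ) ≤ α := by
        rcases hbe with h | h
        · exact le_of_lt h.2.2
        · exact le_of_eq h.2.2
      apply hXPi
      apply mem_PiSet_of_side hctri
      right; left
      rw [sideV]
      have hyb : y ≤ (f1 c.1 : ℝ) := by
        have := hv1 c hctri h1
        linarith
      have hyc : (f3 c.2.2 : ℝ) - (f2 c.2.1 : ℝ) ≤ y := by
        rw [h2]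
        linarith
      have := vert_mem_segment (a := ((f2 c.2.1 : ℝ))) hyc hyb
      have hXeq : ((x, y) : ℝ × ℝ) = ((f2 c.2.1 : ℝ), y) := by
        rw [Prod.mk.injEq]
        exact ⟨by rw [h2, hxα], rfl⟩
      rwa [hXeq]
  · -- α < x : π = K + A + CC = 1
    have hsα : α < x + y := by linarith
    apply hXπ
    have hcongr : ∀ c ∈ tri, ((x, y) ∈ interior (DeltaOf f1 f2 f3 c)) ↔
        (pK c ∨ pA c ∨ pC c) := by
      intro c hc
      rw [hregion x y hdx hy0' hyρ c hc]
      constructor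
      · rintro (h | ⟨h, hcc⟩ | ⟨h, hcc⟩ | ⟨h, hcc⟩ | ⟨h, hcc⟩ | ⟨h, hcc1, hcc2⟩)
        · exact Or.inl h
        · exact Or.inr (Or.inl h)
        · exact absurd hcc (not_lt.2 (le_of_lt hxα))
        · exact Or.inr (Or.inr h)
        · exact absurd hcc (not_lt.2 (le_of_lt hsα))
        · exact absurd hcc1 (not_lt.2 (le_of_lt hxα))
      · rintro (h | h | h)
        · exact Or.inl h
        · exact Or.inr (Or.inl ⟨h, hxα⟩)
        · exact Or.inr (Or.inr (Or.inr (Or.inl ⟨h, hsα⟩)))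
    have s1 := card_filter_or2 tri pK (fun c => pA c ∨ pC c) (fun c h1 h2 => by
      rcases h2 with h2 | h2
      · exact dKA c h1 h2
      · exact dKC c h1 h2)
    have s2 := card_filter_or2 tri pA pC dAC
    rw [piCount_eq_card, Finset.filter_congr hcongr, s1, s2]
    omega

end Aux7
section Aux8
set_option linter.unusedSectionVars false
open scoped Classical

variable {R C S : Type*} [DecidableEq R] [DecidableEq C] [DecidableEq S]

/-- Swap the row and column coordinates of a triple. -/
def swapT (p : R × C × S) : C × R × S := (p.2.1, p.1, p.2.2)

lemma swapT_inj : Function.Injective (swapT (R := R) (C := C) (S := S)) := by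
  rintro ⟨a1, a2, a3⟩ ⟨b1, b2, b3⟩ h
  simp [swapT, Prod.ext_iff] at h
  simp [Prod.ext_iff, h.1, h.2.1, h.2.2]

lemma exu_swap {t : Finset (R × C × S)}
    {Q' : (R × C × S) → Prop} {Q : (C × R × S) → Prop}
    (hQ : ∀ q, Q (swapT q) ↔ Q' q)
    (h : ∃! q, q ∈ t ∧ Q' q) : ∃! q', q' ∈ t.image swapT ∧ Q q' := by
  obtain ⟨q, ⟨hq, hQq⟩, hu⟩ := h
  refine ⟨swapT q, ⟨Finset.mem_image_of_mem _ hq, (hQ q).2 hQq⟩, ?_⟩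
  rintro q' ⟨hq', hQq'⟩
  obtain ⟨r, hr, rfl⟩ := Finset.mem_image.1 hq'
  rw [hu r ⟨hr, (hQ r).1 hQq'⟩]

lemma isLatinBitrade_swap {star tri : Finset (R × C × S)} (h : IsLatinBitrade star tri) :
    IsLatinBitrade (star.image swapT) (tri.image swapT) := by
  constructor
  · rw [Finset.disjoint_left]
    intro p hp hp'
    obtain ⟨q, hq, hqe⟩ := Finset.mem_image.1 hp
    obtain ⟨q', hq', hqe'⟩ := Finset.mem_image.1 hp'
    rw [← hqe'] at hqe
    rw [swapT_inj hqe] at hq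
    exact Finset.disjoint_left.1 h.disj hq hq'
  · rintro p' hp'
    obtain ⟨p, hp, rfl⟩ := Finset.mem_image.1 hp'
    exact exu_swap (fun q => ⟨fun hh => ⟨hh.2, hh.1⟩, fun hh => ⟨hh.2, hh.1⟩⟩) (h.r2a p hp)
  · rintro p' hp'
    obtain ⟨p, hp, rfl⟩ := Finset.mem_image.1 hp'
    exact exu_swap (fun q => Iff.rfl) (h.r2c p hp)
  · rintro p' hp'
    obtain ⟨p, hp, rfl⟩ := Finset.mem_image.1 hp'
    exact exu_swap (fun q => Iff.rfl) (h.r2b p hp)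
  · rintro q' hq'
    obtain ⟨q, hq, rfl⟩ := Finset.mem_image.1 hq'
    exact exu_swap (fun p => ⟨fun hh => ⟨hh.2, hh.1⟩, fun hh => ⟨hh.2, hh.1⟩⟩) (h.r3a q hq)
  · rintro q' hq'
    obtain ⟨q, hq, rfl⟩ := Finset.mem_image.1 hq'
    exact exu_swap (fun p => Iff.rfl) (h.r3c q hq)
  · rintro q' hq'
    obtain ⟨q, hq, rfl⟩ := Finset.mem_image.1 hq'
    exact exu_swap (fun p => Iff.rfl) (h.r3b q hq)

lemma isEqSolution_swap {star : Finset (R × C × S)} {a : R × C × S}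
    {f1 : R → ℚ} {f2 : C → ℚ} {f3 : S → ℚ} (h : IsEqSolution star a f1 f2 f3) :
    IsEqSolution (star.image swapT) (swapT a) f2 f1 f3 := by
  refine ⟨h.2.1, h.1, h.2.2.1, ?_⟩
  rintro b' hb' hne
  obtain ⟨b, hb, rfl⟩ := Finset.mem_image.1 hb'
  have hbne : b ≠ a := fun hh => hne (by rw [hh])
  have := h.2.2.2 b hb hbne
  show f2 b.2.1 + f1 b.1 = f3 b.2.2
  linarith [this]

lemma swap_mem_segment {u v p : ℝ × ℝ} :
    p.swap ∈ segment ℝ u v ↔ p ∈ segment ℝ u.swap v.swap := by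
  constructor
  · rintro ⟨s, t, hs, ht, hst, hval⟩
    refine ⟨s, t, hs, ht, hst, ?_⟩
    have := congrArg Prod.swap hval
    simpa [Prod.ext_iff, Prod.swap] using this
  · rintro ⟨s, t, hs, ht, hst, hval⟩
    refine ⟨s, t, hs, ht, hst, ?_⟩
    have := congrArg Prod.swap hval
    simpa [Prod.ext_iff, Prod.swap] using this

lemma interior_DeltaT_swap (r1 r2 r3 : ℚ) (X : ℝ × ℝ) :
    X ∈ interior (DeltaT r2 r1 r3) ↔ X.swap ∈ interior (DeltaT r1 r2 r3) := by
  rw [interior_DeltaT_eq, interior_DeltaT_eq]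
  constructor
  · rintro (⟨h, h1, h2, h3⟩ | ⟨h, h1, h2, h3⟩)
    · exact Or.inl ⟨by linarith, h2, h1, by simp [Prod.swap]; linarith⟩
    · exact Or.inr ⟨by linarith, h2, h1, by simp [Prod.swap]; linarith⟩
  · rintro (⟨h, h1, h2, h3⟩ | ⟨h, h1, h2, h3⟩)
    · refine Or.inl ⟨by linarith, h2, h1, ?_⟩
      simp [Prod.swap] at h3
      linarith
    · refine Or.inr ⟨by linarith, h2, h1, ?_⟩
      simp [Prod.swap] at h3
      linarith

lemma piCount_swap (tri : Finset (R × C × S)) (f1 : R → ℚ) (f2 : C → ℚ) (f3 : S → ℚ)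
    (X : ℝ × ℝ) :
    piCount (tri.image swapT) f2 f1 f3 X = piCount tri f1 f2 f3 X.swap := by
  rw [piCount_eq_card, piCount_eq_card]
  have himg : (tri.image swapT).filter (fun c => X ∈ interior (DeltaOf f2 f1 f3 c))
      = (tri.filter fun c => X ∈ interior (DeltaOf f2 f1 f3 (swapT c))).image swapT := by
    ext c'
    simp only [Finset.mem_filter, Finset.mem_image]
    constructor
    · rintro ⟨⟨c, hc, rfl⟩, hmem⟩
      exact ⟨c, ⟨hc, hmem⟩, rfl⟩
    · rintro ⟨c, ⟨hc, hmem⟩, rfl⟩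
      exact ⟨⟨c, hc, rfl⟩, hmem⟩
  rw [himg, Finset.card_image_of_injective _ swapT_inj]
  congr 1
  apply Finset.filter_congr
  intro c _
  exact interior_DeltaT_swap (f1 c.1) (f2 c.2.1) (f3 c.2.2) X

lemma mem_segment_swap {a b X : ℝ × ℝ} :
    X ∈ segment ℝ a b ↔ X.swap ∈ segment ℝ a.swap b.swap := by
  constructor
  · intro h
    rw [swap_mem_segment, Prod.swap_swap, Prod.swap_swap]
    exact h
  · intro h
    rw [swap_mem_segment, Prod.swap_swap, Prod.swap_swap] at h
    exact h

lemma PiSet_swap (tri : Finset (R × C × S)) (f1 : R → ℚ) (f2 : C → ℚ) (f3 : S → ℚ)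
    (X : ℝ × ℝ) :
    X ∈ PiSet (tri.image swapT) f2 f1 f3 ↔ X.swap ∈ PiSet tri f1 f2 f3 := by
  have sidesw : ∀ c : R × C × S,
      (X ∈ sideH (f2 c.2.1) (f1 c.1) (f3 c.2.2) ∪ sideV (f2 c.2.1) (f1 c.1) (f3 c.2.2) ∪
        sideD (f2 c.2.1) (f1 c.1) (f3 c.2.2)) ↔
      (X.swap ∈ sideH (f1 c.1) (f2 c.2.1) (f3 c.2.2) ∪ sideV (f1 c.1) (f2 c.2.1) (f3 c.2.2) ∪
        sideD (f1 c.1) (f2 c.2.1) (f3 c.2.2)) := by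
    intro c
    have hH : X ∈ sideH (f2 c.2.1) (f1 c.1) (f3 c.2.2) ↔
        X.swap ∈ sideV (f1 c.1) (f2 c.2.1) (f3 c.2.2) := by
      rw [sideH, sideV, mem_segment_swap]
      simp [Prod.swap_prod_mk]
    have hV : X ∈ sideV (f2 c.2.1) (f1 c.1) (f3 c.2.2) ↔
        X.swap ∈ sideH (f1 c.1) (f2 c.2.1) (f3 c.2.2) := by
      rw [sideV, sideH, mem_segment_swap]
      simp [Prod.swap_prod_mk]
    have hD : X ∈ sideD (f2 c.2.1) (f1 c.1) (f3 c.2.2) ↔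
        X.swap ∈ sideD (f1 c.1) (f2 c.2.1) (f3 c.2.2) := by
      rw [sideD, sideD, mem_segment_swap, segment_symm]
      simp [Prod.swap_prod_mk]
    rw [Set.mem_union, Set.mem_union, Set.mem_union, Set.mem_union, hH, hV, hD]
    tauto
  constructor
  · intro h
    rw [PiSet, Set.mem_iUnion] at h
    obtain ⟨c', hmem⟩ := h
    rw [Set.mem_iUnion] at hmem
    obtain ⟨hc', hside⟩ := hmem
    obtain ⟨c, hc, rfl⟩ := Finset.mem_image.1 hc'
    rw [PiSet, Set.mem_iUnion]
    refine ⟨c, Set.mem_iUnion.2 ⟨hc, ?_⟩⟩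
    exact ((sidesw c).1 hside)
  · intro h
    rw [PiSet, Set.mem_iUnion] at h
    obtain ⟨c, hmem⟩ := h
    rw [Set.mem_iUnion] at hmem
    obtain ⟨hc, hside⟩ := hmem
    rw [PiSet, Set.mem_iUnion]
    refine ⟨swapT c, Set.mem_iUnion.2 ⟨Finset.mem_image_of_mem _ hc, ?_⟩⟩
    exact ((sidesw c).2 hside)

lemma interior_SigmaT_swap (X : ℝ × ℝ) :
    X ∈ interior SigmaT ↔ X.swap ∈ interior SigmaT := by
  rw [interior_SigmaT_eq]
  constructor
  · rintro ⟨h1, h2, h3⟩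
    exact ⟨h2, h1, by simp [Prod.swap]; linarith⟩
  · rintro ⟨h1, h2, h3⟩
    simp [Prod.swap] at h1 h2 h3
    exact ⟨h2, h1, by linarith⟩

lemma gammaHat_swap (tri : Finset (R × C × S)) (f1 : R → ℚ) (f2 : C → ℚ) (f3 : S → ℚ) :
    GammaHat (tri.image swapT) f2 f1 f3 = Prod.swap ⁻¹' (GammaHat tri f1 f2 f3) := by
  ext X
  show (X ∈ GammaSet (tri.image swapT) f2 f1 f3 ∧ _) ↔ _
  rw [GammaSet]
  constructor
  · rintro ⟨⟨hint, hpi⟩, hpc⟩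
    refine ⟨⟨(interior_SigmaT_swap X).1 hint, fun hh => hpi ((PiSet_swap tri f1 f2 f3 X).2 hh)⟩, ?_⟩
    rwa [← piCount_swap tri f1 f2 f3 X]
  · rintro ⟨⟨hint, hpi⟩, hpc⟩
    refine ⟨⟨?_, fun hh => hpi ((PiSet_swap tri f1 f2 f3 X).1 hh)⟩, ?_⟩
    · rw [interior_SigmaT_swap X]; exact hint
    · rwa [piCount_swap tri f1 f2 f3 X]

lemma closure_gammaHat_swap (tri : Finset (R × C × S)) (f1 : R → ℚ) (f2 : C → ℚ)
    (f3 : S → ℚ) :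
    closure (GammaHat (tri.image swapT) f2 f1 f3)
      = Prod.swap ⁻¹' closure (GammaHat tri f1 f2 f3) := by
  rw [gammaHat_swap]
  have : (Prod.swap ⁻¹' (GammaHat tri f1 f2 f3) : Set (ℝ × ℝ))
      = (Homeomorph.prodComm ℝ ℝ) ⁻¹' (GammaHat tri f1 f2 f3) := by
    rw [Homeomorph.coe_prodComm]
  rw [this, ← Homeomorph.preimage_closure, Homeomorph.coe_prodComm]

end Aux8

/-- **Lemma 3.3.** The minimal point `P` of the closure of `Γ̂` is not a lateral point
of `Σ`: if it lies on the boundary of `Σ`, it is one of the three vertices of `Σ`. -/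
theorem stmt5 (star tri : Finset (R × C × S)) (hsph : IsSphericalBitrade star tri)
    (a : R × C × S) (ha : a ∈ star)
    (f1 : R → ℚ) (f2 : C → ℚ) (f3 : S → ℚ)
    (hsol : IsEqSolution star a f1 f2 f3)
    (hsep : SeparatedSolution star f1 f2 f3)
    (hne : (GammaHat tri f1 f2 f3).Nonempty)
    (P : ℝ × ℝ)
    (hP : P ∈ closure (GammaHat tri f1 f2 f3))
    (hPmin : ∀ Q ∈ closure (GammaHat tri f1 f2 f3), Q ≠ P → ptOrder P Q) :
    ¬ (P ∈ frontier SigmaT ∧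
        P ∉ ({((0 : ℝ), (0 : ℝ)), ((1 : ℝ), (0 : ℝ)), ((0 : ℝ), (1 : ℝ))} : Set (ℝ × ℝ))) := by
  rintro ⟨hfront, hnotv⟩
  simp only [Set.mem_insert_iff, Set.mem_singleton_iff, not_or] at hnotv
  obtain ⟨hv1, hv2, hv3⟩ := hnotv
  have hlb := hsph.1
  have hPS : P ∈ SigmaT := by
    have := frontier_subset_closure (s := SigmaT) hfront
    rwa [isClosed_SigmaT.closure_eq] at this
  obtain ⟨hP1, hP2, hP3⟩ := hPS
  have hPnotint : P ∉ interior SigmaT := hfront.2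
  rw [interior_SigmaT_eq] at hPnotint
  by_cases hdiag : P.1 + P.2 = 1
  · obtain ⟨X, hX⟩ := hne
    have hXint := hX.1.1
    rw [interior_SigmaT_eq] at hXint
    obtain ⟨-, -, hXs⟩ := hXint
    have hXne : X ≠ P := by
      intro h
      rw [h] at hXs
      exact absurd hdiag (ne_of_lt hXs)
    rcases hPmin X (subset_closure hX) hXne with h | ⟨h, -⟩
    · rw [hdiag] at h; linarith
    · rw [hdiag] at h; linarith
  have hsum : P.1 + P.2 < 1 := lt_of_le_of_ne hP3 hdiag
  have hzero : P.1 = 0 ∨ P.2 = 0 := by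
    by_contra h
    push_neg at h
    exact hPnotint ⟨lt_of_le_of_ne hP1 (Ne.symm h.1), lt_of_le_of_ne hP2 (Ne.symm h.2), hsum⟩
  rcases hzero with h0 | h0
  · -- left side
    have hβ : 0 < P.2 := by
      rcases lt_or_eq_of_le hP2 with h | h
      · exact h
      · exact absurd (Prod.ext h0 h.symm) hv1
    apply core_bottom (star.image swapT) (tri.image swapT) (isLatinBitrade_swap hlb)
      (swapT a) (Finset.mem_image_of_mem _ ha) f2 f1 f3 (isEqSolution_swap hsol) P.swap
    · rw [closure_gammaHat_swap]
      exact Set.mem_preimage.2 (by rw [Prod.swap_swap]; exact hP)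
    · intro Q hQ hQne
      rw [closure_gammaHat_swap] at hQ
      have hQ' : Q.swap ∈ closure (GammaHat tri f1 f2 f3) := hQ
      have hQne' : Q.swap ≠ P := by
        intro h
        apply hQne
        have := congrArg Prod.swap h
        rwa [Prod.swap_swap] at this
      rcases hPmin _ hQ' hQne' with h | ⟨he, h2⟩
      · left
        have : Q.swap.1 + Q.swap.2 = Q.1 + Q.2 := by simp [Prod.swap]; ring
        rw [this] at h
        show P.swap.1 + P.swap.2 < Q.1 + Q.2
        simp only [Prod.fst_swap, Prod.snd_swap]
        linarith
      · exfalso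
        have hQS : Q.swap ∈ SigmaT := closure_GammaHat_subset_SigmaT hQ'
        obtain ⟨hq1, hq2, -⟩ := hQS
        have h2' : P.2 < Q.1 := by simpa using h2
        have he' : P.1 + P.2 = Q.2 + Q.1 := by
          have : Q.swap.1 + Q.swap.2 = Q.2 + Q.1 := by simp [Prod.swap]
          rw [this] at he
          exact he
        simp only [Prod.fst_swap, Prod.snd_swap] at hq1 hq2
        rw [h0] at he'
        linarith
    · show P.swap.2 = 0
      simpa using h0
    · show 0 < P.swap.1
      simpa using hβ
    · show P.swap.1 < 1
      simp only [Prod.fst_swap]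
      linarith
  · -- bottom side
    have hα : 0 < P.1 := by
      rcases lt_or_eq_of_le hP1 with h | h
      · exact h
      · exact absurd (Prod.ext h.symm h0) hv1
    exact core_bottom star tri hlb a ha f1 f2 f3 hsol P hP hPmin h0 hα (by linarith)
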